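/- arXiv:2505.11166 — 3 statements merged into one kernel-verified Lean document; each statement's English description precedes it below -/
import Mathlib

section
/- Let σ(t) = 1/(1 + e^{-t}) and f(t) = -log σ(t). Then for all real x and γ: f(x - γ) + f(-x - γ) ≤ |x| + 2·log(1 + e^{γ}). Equivalently, -log σ(x - γ) - log σ(-x - γ) ≤ |x| + 2 log(1 + e^{γ}). -/
lemma softplus_shift (a b : ℝ) :
    Real.log (1 + Real.exp (a + b)) ≤ Real.log (1 + Real.exp a) + max b 0 := by
  have h1 : (0:ℝ) < 1 + Real.exp a := by positivity
  have key : 1 + Real.exp (a + b) ≤ (1 + Real.exp a) * Real.exp (max b 0) := by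
    have hb : Real.exp (a + b) ≤ Real.exp a * Real.exp (max b 0) := by
      rw [← Real.exp_add]
      exact Real.exp_le_exp.mpr (by simp [le_max_left])
    have h2 : (1:ℝ) ≤ Real.exp (max b 0) :=
      Real.one_le_exp (le_max_right b 0)
    nlinarith [Real.exp_pos a]
  calc Real.log (1 + Real.exp (a + b))
      ≤ Real.log ((1 + Real.exp a) * Real.exp (max b 0)) :=
        Real.log_le_log (by positivity) key
    _ = Real.log (1 + Real.exp a) + max b 0 := by
        rw [Real.log_mul (ne_of_gt h1) (Real.exp_ne_zero _), Real.log_exp]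

theorem logistic_loss_symmetrized_bound (x γ : ℝ) :
    -Real.log ((1 + Real.exp (-(x - γ)))⁻¹) +
      -Real.log ((1 + Real.exp (-(-x - γ)))⁻¹) ≤
    |x| + 2 * Real.log (1 + Real.exp γ) := by
  rw [Real.log_inv, Real.log_inv, neg_neg, neg_neg]
  have h1 : Real.log (1 + Real.exp (-(x - γ))) ≤ Real.log (1 + Real.exp γ) + max (-x) 0 := by
    have := softplus_shift γ (-x); simpa [sub_eq_add_neg, add_comm] using this
  have h2 : Real.log (1 + Real.exp (-(-x - γ))) ≤ Real.log (1 + Real.exp γ) + max x 0 := by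
    have := softplus_shift γ x; simpa [sub_eq_add_neg, add_comm] using this
  have habs : max x 0 + max (-x) 0 = |x| := by
    rcases le_total x 0 with h | h <;> simp [abs_of_nonpos, abs_of_nonneg, max_eq_left, max_eq_right, h]
  linarith
end

section
/- Let f(t) = log(1 + e^{-t}). Then for all real r_l, r_s, γ: -(3r_l + 3r_s) + log(e^{3r_s + 3γ} + e^{3r_l}) + log(e^{3r_s} + e^{3r_l + 3γ}) ≤ 3·|r_l - r_s| + 2·log(1 + e^{3γ}). -/
/-!
Factoring `exp (3 r_l)` and `exp (3 r_s)` out of the two logarithms turns the left side into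
`log (1 + exp (g - d)) + log (1 + exp (g + d))` with `d = 3 (r_l - r_s)` and `g = 3γ`.
Shifting the argument of `x ↦ log (1 + exp x)` by `a` raises it by at most `max a 0`,
and `max (-d) 0 + max d 0 = |d|`.
-/

open Real

lemma Real.log_exp_add_exp (u v : ℝ) : log (exp u + exp v) = v + log (1 + exp (u - v)) := by
  have hsplit : exp u + exp v = exp v * (1 + exp (u - v)) := by
    rw [mul_add, mul_one, ← exp_add, add_sub_cancel]
    ring
  rw [hsplit, log_mul (exp_ne_zero v) (by positivity), log_exp]

lemma Real.log_one_add_exp_add_le (a b : ℝ) :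
    log (1 + exp (a + b)) ≤ max a 0 + log (1 + exp b) := by
  rw [← log_exp (max a 0), ← log_mul (exp_ne_zero _) (by positivity)]
  apply log_le_log (by positivity)
  rw [mul_add, mul_one, ← exp_add]
  exact add_le_add (one_le_exp (le_max_right a 0)) (exp_le_exp.2 (by linarith [le_max_left a 0]))

lemma Real.log_one_add_exp_neg_add_add_log_one_add_exp_add_le (d g : ℝ) :
    log (1 + exp (-d + g)) + log (1 + exp (d + g)) ≤ |d| + 2 * log (1 + exp g) := by
  have hneg := log_one_add_exp_add_le (-d) g
  have hpos := log_one_add_exp_add_le d g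
  linarith [max_zero_add_max_neg_zero_eq_abs_self d]

theorem solopo_logsigmoid_explicit (r_l r_s γ : ℝ) :
    -(3*r_l + 3*r_s) + Real.log (Real.exp (3*r_s + 3*γ) + Real.exp (3*r_l))
      + Real.log (Real.exp (3*r_s) + Real.exp (3*r_l + 3*γ)) ≤
    3 * |r_l - r_s| + 2 * Real.log (1 + Real.exp (3*γ)) := by
  have hsum := log_one_add_exp_neg_add_add_log_one_add_exp_add_le (3 * (r_l - r_s)) (3*γ)
  rw [abs_mul, abs_of_pos three_pos] at hsum
  rw [log_exp_add_exp, add_comm (exp (3*r_s)), log_exp_add_exp]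
  ring_nf at hsum ⊢
  linarith
end

section
/- Let f(t) = log(1 + e^{-t}) and γ ∈ ℝ. Define g(x) = f(x - γ) + f(-x - γ) - |x|. Then g(x) ≤ 2 log(1 + e^{γ}) for all x ∈ ℝ, i.e., log(1+e^{-(x-γ)}) + log(1+e^{x+γ}) ≤ |x| + 2 log(1+e^{γ}). -/
lemma aux_logistic (γ t : ℝ) (ht : 0 ≤ t) :
    Real.log (1 + Real.exp (γ - t)) + Real.log (1 + Real.exp (γ + t)) ≤
      t + 2 * Real.log (1 + Real.exp γ) := by
  have h1 : Real.log (1 + Real.exp (γ - t)) ≤ Real.log (1 + Real.exp γ) := by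
    apply Real.log_le_log (by positivity)
    have := Real.exp_le_exp.mpr (by linarith : γ - t ≤ γ)
    linarith
  have h2 : Real.log (1 + Real.exp (γ + t)) ≤ t + Real.log (1 + Real.exp γ) := by
    have hle : 1 + Real.exp (γ + t) ≤ Real.exp t * (1 + Real.exp γ) := by
      have h1t : (1:ℝ) ≤ Real.exp t := Real.one_le_exp ht
      have : Real.exp (γ + t) = Real.exp t * Real.exp γ := by
        rw [← Real.exp_add]; ring_nf
      nlinarith [Real.exp_pos γ]
    calc Real.log (1 + Real.exp (γ + t)) ≤ Real.log (Real.exp t * (1 + Real.exp γ)) :=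
          Real.log_le_log (by positivity) hle
      _ = t + Real.log (1 + Real.exp γ) := by
          rw [Real.log_mul (by positivity) (by positivity), Real.log_exp]
  linarith

theorem logistic_margin_loss_bound (x γ : ℝ) :
    Real.log (1 + Real.exp (-(x - γ))) + Real.log (1 + Real.exp (x + γ)) ≤
      |x| + 2 * Real.log (1 + Real.exp γ) := by
  rcases abs_cases x with ⟨h, hx⟩ | ⟨h, hx⟩
  · have := aux_logistic γ x hx
    rw [h]
    have e1 : -(x - γ) = γ - x := by ring
    have e2 : x + γ = γ + x := by ring
    rw [e1, e2]; linarith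
  · have := aux_logistic γ (-x) (by linarith)
    rw [h]
    have e1 : -(x - γ) = γ + (-x) := by ring
    have e2 : x + γ = γ - (-x) := by ring
    rw [e1, e2]; linarith
end
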